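/- arXiv:2401.07365 — 7 statements merged into one kernel-verified Lean document; each statement's English description precedes it below -/
import Mathlib

section
/- Using the binomial betting strategy with parameter p ∈ [0,1], i.e., B_t(0) = (1−p)(t+1)/(t−L_{t−1}) and B_t(1) = p(t+1)/(L_{t−1}+1), the wealth after T steps with exactly ℓ losses equals W_T^p(ℓ) = (T+1)·p^ℓ·(1−p)^{T−ℓ}·C(T,ℓ), regardless of the order in which the ℓ losses occur. -/
open Finset

/-! With `W(t, ℓ) = (t + 1) p^ℓ (1 - p)^(t - ℓ) C(t, ℓ)`, each bet is a ratio of consecutive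
wealths: `W(t + 1, ℓ + 1) = W(t, ℓ) · p (t + 2) / (ℓ + 1)` and
`W(t + 1, ℓ) = W(t, ℓ) · (1 - p) (t + 2) / (t + 1 - ℓ)`, i.e. the Pascal-type identities
`(k + 1) C(n + 1, k + 1) = (n + 1) C(n, k)` and `(n + 1 - k) C(n + 1, k) = (n + 1) C(n, k)`.
Hence the product of the bets telescopes to `W(T, L_T)` whatever the order of the losses. -/

noncomputable section

namespace BinomialBetting

def wealth (p : ℝ) (T ℓ : ℕ) : ℝ :=
  ((T : ℝ) + 1) * p ^ ℓ * (1 - p) ^ (T - ℓ) * (T.choose ℓ : ℝ)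

/-- Round `t` here is the paper's round `t + 1`, so the count of earlier losses over
`i 0, …, i (t - 1)` is the paper's `L_t`. -/
def bet (p : ℝ) (i : ℕ → Bool) (t : ℕ) : ℝ :=
  if i t then p * ((t : ℝ) + 2) / ((Nat.count (fun s => i s = true) t : ℝ) + 1)
  else (1 - p) * ((t : ℝ) + 2) / ((t : ℝ) + 1 - Nat.count (fun s => i s = true) t)

theorem wealth_succ_succ (p : ℝ) (T ℓ : ℕ) :
    wealth p (T + 1) (ℓ + 1) = wealth p T ℓ * (p * ((T : ℝ) + 2) / ((ℓ : ℝ) + 1)) := by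
  have pascal : ((T : ℝ) + 1) * T.choose ℓ = (T + 1).choose (ℓ + 1) * ((ℓ : ℝ) + 1) := by
    exact_mod_cast Nat.add_one_mul_choose_eq T ℓ
  rw [wealth, wealth, Nat.add_sub_add_right]
  push_cast
  field_simp
  linear_combination -(p ^ ℓ * p * (1 - p) ^ (T - ℓ) * ((T : ℝ) + 2)) * pascal

theorem wealth_succ_left (p : ℝ) {T ℓ : ℕ} (hℓ : ℓ ≤ T) :
    wealth p (T + 1) ℓ = wealth p T ℓ * ((1 - p) * ((T : ℝ) + 2) / ((T : ℝ) + 1 - ℓ)) := by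
  have pascal : (T.choose ℓ : ℝ) * ((T : ℝ) + 1) = (T + 1).choose ℓ * ((T : ℝ) + 1 - ℓ) := by
    have h := congrArg (Nat.cast (R := ℝ)) (Nat.choose_mul_succ_eq T ℓ)
    push_cast [Nat.cast_sub (hℓ.trans T.le_succ)] at h
    linear_combination h
  have hpos : (0 : ℝ) < (T : ℝ) + 1 - ℓ := by
    have : (ℓ : ℝ) ≤ T := by exact_mod_cast hℓ
    linarith
  rw [wealth, wealth, Nat.sub_add_comm hℓ, pow_succ]
  push_cast
  field_simp
  linear_combination -(p ^ ℓ * (1 - p) ^ (T - ℓ) * (1 - p) * ((T : ℝ) + 2)) * pascal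

theorem prod_bet (p : ℝ) (i : ℕ → Bool) (T : ℕ) :
    ∏ t ∈ range T, bet p i t = wealth p T (Nat.count (fun s => i s = true) T) := by
  induction T with
  | zero => simp [wealth]
  | succ T ih =>
    rw [prod_range_succ, ih, Nat.count_succ, bet]
    cases i T
    · simpa using (wealth_succ_left p (Nat.count_le _)).symm
    · simpa using (wealth_succ_succ p _ _).symm

end BinomialBetting

end

theorem stmt2_general (T : ℕ) (i : ℕ → Bool) (p : ℝ)
    (L : ℕ → ℕ) (hL : ∀ t, L t = ((Finset.range t).filter (fun s => i s = true)).card)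
    (B : ℕ → ℝ)
    (hB : ∀ t, B t = if i t then p * ((t : ℝ) + 2) / ((L t : ℝ) + 1)
      else (1 - p) * ((t : ℝ) + 2) / ((t : ℝ) + 1 - L t)) :
    (∏ t ∈ Finset.range T, B t)
      = ((T : ℝ) + 1) * p ^ (L T) * (1 - p) ^ (T - L T) * (Nat.choose T (L T) : ℝ) := by
  obtain rfl : L = Nat.count (fun s => i s = true) :=
    funext fun t => by rw [hL, Nat.count_eq_card_filter_range]
  obtain rfl : B = BinomialBetting.bet p i := funext hB
  exact BinomialBetting.prod_bet p i T

/-- Closed-form wealth of the binomial strategy: with bets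
`B_t(1) = p(t+1)/(L_{t-1}+1)` and `B_t(0) = (1−p)(t+1)/(t−L_{t-1})`
(written 0-indexed below), the wealth after `T` steps along any binary
sequence `i` with `ℓ = L_T` losses equals `(T+1)·p^ℓ·(1−p)^{T−ℓ}·C(T,ℓ)`,
regardless of the order of the losses. -/
theorem stmt2 (T : ℕ) (i : ℕ → Bool) (p : ℝ) (hp0 : 0 ≤ p) (hp1 : p ≤ 1)
    (L : ℕ → ℕ) (hL : ∀ t, L t = ((Finset.range t).filter (fun s => i s = true)).card)
    (B : ℕ → ℝ)
    (hB : ∀ t, B t = if i t then p * ((t : ℝ) + 2) / ((L t : ℝ) + 1)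
      else (1 - p) * ((t : ℝ) + 2) / ((t : ℝ) + 1 - L t)) :
    (∏ t ∈ Finset.range T, B t)
      = ((T : ℝ) + 1) * p ^ (L T) * (1 - p) ^ (T - L T) * (Nat.choose T (L T) : ℝ) :=
  stmt2_general T i p L hL B hB
end

section
/- For every T ∈ ℕ and every ℓ ∈ {0,...,T}, the oracle binomial wealth satisfies W_T^{ℓ/T}(ℓ) ≥ √(2/(π·e^{1/6}))·√(T+1). -/
/-!
With `T = ℓ + m` and `1 ≤ ℓ, m`, the product `(ℓ/T)^ℓ (m/T)^m (T/e)^T` collapses to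
`(ℓ/e)^ℓ (m/e)^m`, so the two-sided Stirling bounds
`√(2πn)(n/e)^n ≤ n! ≤ √(2πn)(n/e)^n e^{1/(12n)}` give
`W_T^{ℓ/T}(ℓ) ≥ (T+1) √(T / (2π ℓ m)) e^{-1/(12ℓ) - 1/(12m)}`.
Squaring, the claim reduces to `4ℓm e^{1/(6ℓ) + 1/(6m)} ≤ T(T+1) e^{1/6}`, which holds by AM-GM when
`ℓ, m ≥ 2` and by a direct estimate when one of them is `1`. For `ℓ ∈ {0, T}` the wealth is `T + 1`.
The upper Stirling bound comes from Robbins' stepwise estimate, which makes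
`log (stirlingSeq n) - 1/(12n)` increase towards `log √π`.
-/

open Real Filter Topology Stirling Nat

namespace Stirling

theorem monotone_log_stirlingSeq_succ_sub :
    Monotone fun n : ℕ ↦ log (stirlingSeq (n + 1)) - 1 / (12 * ((n : ℝ) + 1)) := by
  refine monotone_nat_of_le_succ fun n ↦ ?_
  have hstep := log_stirlingSeq_sdiff_le (n + 1)
  have htele : (1 : ℝ) / (12 * ↑(n + 1) * (↑(n + 1) + 1))
      = 1 / (12 * ((n : ℝ) + 1)) - 1 / (12 * (↑(n + 1) + 1)) := by
    push_cast; field_simp; ring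
  push_cast at hstep htele ⊢
  linarith

theorem tendsto_log_stirlingSeq_succ_sub :
    Tendsto (fun n : ℕ ↦ log (stirlingSeq (n + 1)) - 1 / (12 * ((n : ℝ) + 1))) atTop
      (𝓝 (log √π)) := by
  have hlog : Tendsto (fun n : ℕ ↦ log (stirlingSeq (n + 1))) atTop (𝓝 (log √π)) :=
    ((continuousAt_log (by positivity)).tendsto).comp
      (tendsto_stirlingSeq_sqrt_pi.comp (tendsto_add_atTop_nat 1))
  have hzero : Tendsto (fun n : ℕ ↦ 1 / (12 * ((n : ℝ) + 1))) atTop (𝓝 0) := by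
    have h := (tendsto_one_div_add_atTop_nhds_zero_nat (𝕜 := ℝ)).const_mul (1 / 12)
    rw [mul_zero] at h
    exact h.congr fun n ↦ by field_simp
  simpa using hlog.sub hzero

theorem stirlingSeq_le_sqrt_pi_mul_exp {n : ℕ} (hn : n ≠ 0) :
    stirlingSeq n ≤ √π * exp (1 / (12 * n)) := by
  obtain ⟨k, rfl⟩ := exists_eq_succ_of_ne_zero hn
  have hk := monotone_log_stirlingSeq_succ_sub.ge_of_tendsto tendsto_log_stirlingSeq_succ_sub k
  rw [← log_le_log_iff (stirlingSeq'_pos k) (by positivity),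
    log_mul (by positivity) (by positivity), log_exp]
  push_cast
  linarith

theorem factorial_le_stirling_mul_exp {n : ℕ} (hn : n ≠ 0) :
    (n ! : ℝ) ≤ √(2 * π * n) * (n / exp 1) ^ n * exp (1 / (12 * n)) := by
  have h := stirlingSeq_le_sqrt_pi_mul_exp hn
  rw [stirlingSeq, div_le_iff₀ (by positivity)] at h
  have hsqrt : √(2 * π * n) = √π * √(2 * n) := by
    rw [← sqrt_mul pi_pos.le]; ring_nf
  rw [hsqrt]
  linarith

end Stirling

open Stirling

theorem div_pow_mul_div_pow_mul_div_pow_add {K : Type*} [Field K] (x y s c : K) (ℓ m : ℕ)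
    (hs : s ≠ 0) : (x / s) ^ ℓ * (y / s) ^ m * (s / c) ^ (ℓ + m) = (x / c) ^ ℓ * (y / c) ^ m := by
  rw [pow_add, mul_mul_mul_comm, ← mul_pow, ← mul_pow, div_mul_div_cancel₀ hs,
    div_mul_div_cancel₀ hs]

theorem stirling_div_le_choose_mul_pow_mul_pow {ℓ m : ℕ} (hℓ : ℓ ≠ 0) (hm : m ≠ 0) :
    √(2 * π * (ℓ + m)) / (√(2 * π * ℓ) * √(2 * π * m) * exp (1 / (12 * ℓ) + 1 / (12 * m)))
      ≤ (ℓ + m).choose ℓ * ((ℓ : ℝ) / (ℓ + m)) ^ ℓ * ((m : ℝ) / (ℓ + m)) ^ m := by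
  have hT : (ℓ : ℝ) + m ≠ 0 := by positivity
  have hchoose : ((ℓ + m).choose ℓ : ℝ) * ℓ ! * m ! = (ℓ + m)! := by
    have h := Nat.choose_mul_factorial_mul_factorial (Nat.le_add_right ℓ m)
    rw [Nat.add_sub_cancel_left] at h
    exact_mod_cast h
  have hT! := le_factorial_stirling (ℓ + m)
  have hℓ! := factorial_le_stirling_mul_exp hℓ
  have hm! := factorial_le_stirling_mul_exp hm
  push_cast at hT!
  set p := ((ℓ : ℝ) / (ℓ + m)) ^ ℓ * ((m : ℝ) / (ℓ + m)) ^ m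
  calc _ = √(2 * π * (ℓ + m)) * (((ℓ : ℝ) + m) / exp 1) ^ (ℓ + m) * p /
        ((√(2 * π * ℓ) * (ℓ / exp 1) ^ ℓ * exp (1 / (12 * ℓ))) *
          (√(2 * π * m) * (m / exp 1) ^ m * exp (1 / (12 * m)))) := by
        rw [mul_assoc _ _ p, mul_comm _ p, div_pow_mul_div_pow_mul_div_pow_add _ _ _ _ ℓ m hT,
          exp_add]
        field_simp
    _ ≤ (ℓ + m)! * p / (ℓ ! * m !) := by gcongr
    _ = _ := by rw [← hchoose]; field_simp; ring

theorem four_mul_mul_exp_le {ℓ m : ℕ} (hℓ : ℓ ≠ 0) (hm : m ≠ 0) :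
    4 * ℓ * m * exp (1 / (6 * ℓ) + 1 / (6 * m)) ≤ (ℓ + m) * (ℓ + m + 1) * exp (1 / 6) := by
  wlog hle : ℓ ≤ m generalizing ℓ m
  · convert this hm hℓ (by omega) using 1 <;> ring_nf
  rcases (by omega : ℓ = 1 ∨ 2 ≤ ℓ) with rfl | hℓ2
  · -- `exp x ≤ 1 / (1 - x)` gives `exp (1/(6m)) ≤ 6/5`, and `24m/5 ≤ (m+1)(m+2)`.
    have hM : (1 : ℝ) ≤ m := by exact_mod_cast Nat.one_le_iff_ne_zero.2 hm
    have hx : 1 / (6 * (m : ℝ)) ≤ 1 / 6 := by gcongr; linarith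
    have he : exp (1 / (6 * (m : ℝ))) ≤ 6 / 5 := by
      refine (exp_bound_div_one_sub_of_interval (by positivity) (by linarith)).trans ?_
      rw [div_le_div_iff₀ (by linarith) (by norm_num)]
      linarith
    push_cast
    rw [show (1 : ℝ) / (6 * 1) = 1 / 6 by norm_num, exp_add]
    nlinarith [mul_le_mul_of_nonneg_left he (by positivity : (0 : ℝ) ≤ 4 * m * exp (1 / 6)),
      mul_nonneg (exp_pos (1 / 6 : ℝ)).le (sq_nonneg ((m : ℝ) - 9 / 10)), exp_pos (1 / 6 : ℝ)]
  · have hL : (2 : ℝ) ≤ ℓ := by exact_mod_cast hℓ2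
    have hM : (ℓ : ℝ) ≤ m := by exact_mod_cast hle
    have hexp : exp (1 / (6 * ℓ) + 1 / (6 * m)) ≤ exp (1 / 6) := by
      rw [exp_le_exp]
      have h1 : 1 / (6 * (ℓ : ℝ)) ≤ 1 / 12 := by
        rw [div_le_div_iff₀ (by positivity) (by norm_num)]; linarith
      have h2 : 1 / (6 * (m : ℝ)) ≤ 1 / 12 := by
        rw [div_le_div_iff₀ (by positivity) (by norm_num)]; linarith
      linarith
    have hquad : 4 * (ℓ : ℝ) * m ≤ (ℓ + m) * (ℓ + m + 1) := by nlinarith [sq_nonneg ((ℓ : ℝ) - m)]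
    exact mul_le_mul hquad hexp (by positivity) (by positivity)

theorem sqrt_two_div_pi_mul_exp_mul_sqrt_le_self {x : ℝ} (hx : 1 ≤ x) :
    √(2 / (π * exp (1 / 6))) * √x ≤ x := by
  have hc : √(2 / (π * exp (1 / 6))) ≤ 1 := by
    rw [sqrt_le_one, div_le_one (by positivity)]
    nlinarith [pi_gt_three, one_le_exp (show (0 : ℝ) ≤ 1 / 6 by norm_num)]
  exact (mul_le_of_le_one_left (sqrt_nonneg x) hc).trans (sqrt_le_self_iff.2 (Or.inr hx))

theorem sqrt_two_div_pi_mul_exp_mul_sqrt_le {ℓ m : ℕ} (hℓ : ℓ ≠ 0) (hm : m ≠ 0) :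
    √(2 / (π * exp (1 / 6))) * √((ℓ : ℝ) + m + 1) ≤ ((ℓ : ℝ) + m + 1) *
      (√(2 * π * (ℓ + m)) / (√(2 * π * ℓ) * √(2 * π * m) * exp (1 / (12 * ℓ) + 1 / (12 * m)))) := by
  have hE : exp (1 / (12 * ℓ) + 1 / (12 * m)) ^ 2 = exp (1 / (6 * ℓ) + 1 / (6 * m)) := by
    rw [← exp_nat_mul]; congr 1; push_cast; field_simp; ring
  have hkey := four_mul_mul_exp_le hℓ hm
  rw [← sqrt_mul (by positivity), sqrt_le_left (by positivity), mul_pow, div_pow, mul_pow, mul_pow,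
    sq_sqrt (by positivity), sq_sqrt (by positivity), sq_sqrt (by positivity), hE,
    div_mul_eq_mul_div, ← mul_div_assoc, div_le_div_iff₀ (by positivity) (by positivity)]
  nlinarith [mul_le_mul_of_nonneg_left hkey (by positivity : (0 : ℝ) ≤ 2 * π ^ 2 * (ℓ + m + 1))]

/-- Uniform lower bound on the oracle binomial wealth:
`W_T^{ℓ/T}(ℓ) ≥ √(2/(π·e^{1/6}))·√(T+1)` for every `T` and `ℓ ∈ {0,…,T}`. -/
theorem stmt4 (T ℓ : ℕ) (hℓ : ℓ ≤ T) :
    ((T : ℝ) + 1) * ((ℓ : ℝ) / T) ^ ℓ * (1 - (ℓ : ℝ) / T) ^ (T - ℓ) * (Nat.choose T ℓ : ℝ)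
      ≥ Real.sqrt (2 / (Real.pi * Real.exp (1 / 6))) * Real.sqrt ((T : ℝ) + 1) := by
  rcases eq_or_ne ℓ 0 with rfl | hℓ0
  · simpa using sqrt_two_div_pi_mul_exp_mul_sqrt_le_self (x := (T : ℝ) + 1) (by simp)
  obtain ⟨m, rfl⟩ := Nat.exists_eq_add_of_le hℓ
  rcases eq_or_ne m 0 with rfl | hm0
  · simpa [hℓ0] using sqrt_two_div_pi_mul_exp_mul_sqrt_le_self (x := (ℓ : ℝ) + 1) (by simp)
  have hT : (ℓ : ℝ) + m ≠ 0 := by positivity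
  push_cast
  rw [Nat.add_sub_cancel_left, one_sub_div hT, add_sub_cancel_left]
  calc _ ≤ _ := sqrt_two_div_pi_mul_exp_mul_sqrt_le hℓ0 hm0
    _ ≤ ((ℓ : ℝ) + m + 1) *
        ((ℓ + m).choose ℓ * ((ℓ : ℝ) / (ℓ + m)) ^ ℓ * ((m : ℝ) / (ℓ + m)) ^ m) := by
      gcongr; exact stirling_div_le_choose_mul_pow_mul_pow hℓ0 hm0
    _ = _ := by ring
end

section
/- Let N ∈ ℕ, p = 1/N, and let (ℓ_t)_{t≥1} be the running loss counts of a binary sequence (so ℓ_t − ℓ_{t−1} ∈ {0,1}). If ℓ_N ≥ 1 and there exists T ≥ N with ℓ_T/T ≤ p, then there exists T̃ ≤ T such that ℓ_{T̃}/T̃ = p exactly. -/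
/-! Let `g t = N ℓ_t - t`. Since `ℓ` never decreases, `g` goes down by at most one per step,
so it cannot jump over `0`. The hypotheses say `g N ≥ 0` and `g T ≤ 0`, hence `g` vanishes at
some `T̃ ∈ [N, T]`, i.e. `ℓ_T̃ / T̃ = 1 / N`. -/

theorem Int.exists_mem_Icc_eq_of_sub_one_le {g : ℕ → ℤ} (hg : ∀ t, g t - 1 ≤ g (t + 1))
    {a b : ℕ} (hab : a ≤ b) {c : ℤ} (ha : c ≤ g a) (hb : g b ≤ c) :
    ∃ t ∈ Finset.Icc a b, g t = c := by
  induction b, hab using Nat.le_induction with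
  | base => exact ⟨a, by simp, le_antisymm hb ha⟩
  | succ n han ih =>
    by_cases hn : g n ≤ c
    · obtain ⟨t, ht, hgt⟩ := ih hn
      exact ⟨t, Finset.Icc_subset_Icc_right n.le_succ ht, hgt⟩
    · exact ⟨n + 1, Finset.mem_Icc.2 ⟨han.trans n.le_succ, le_rfl⟩, by linarith [hg n]⟩

theorem stmt6_general (N : ℕ) (hN : 1 ≤ N) (ℓ : ℕ → ℕ)
    (hstep : ∀ t, ℓ (t + 1) = ℓ t ∨ ℓ (t + 1) = ℓ t + 1)
    (hℓN : 1 ≤ ℓ N) (T : ℕ) (hT : N ≤ T)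
    (hle : (ℓ T : ℝ) / T ≤ 1 / N) :
    ∃ T' ≤ T, (ℓ T' : ℝ) / T' = 1 / N := by
  have hNpos : (0 : ℝ) < N := by exact_mod_cast hN
  have hTpos : (0 : ℝ) < T := by exact_mod_cast hN.trans hT
  set g : ℕ → ℤ := fun t => N * ℓ t - t
  have hg : ∀ t, g t - 1 ≤ g (t + 1) := fun t => by
    have : ℓ t ≤ ℓ (t + 1) := by rcases hstep t with h | h <;> omega
    simp only [g]; push_cast; nlinarith
  have hgN : 0 ≤ g N := by simp only [g]; nlinarith
  have hgT : g T ≤ 0 := by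
    rw [div_le_div_iff₀ hTpos hNpos] at hle
    have : N * ℓ T ≤ T := by exact_mod_cast (by linarith : (N : ℝ) * ℓ T ≤ T)
    simp only [g]; omega
  obtain ⟨t, ht, hgt⟩ := Int.exists_mem_Icc_eq_of_sub_one_le hg hT hgN hgT
  obtain ⟨hNt, htT⟩ := Finset.mem_Icc.1 ht
  have htpos : (0 : ℝ) < t := by exact_mod_cast hN.trans hNt
  have hNℓ : (N : ℝ) * ℓ t = t := by
    have : N * ℓ t = t := by simp only [g] at hgt; omega
    exact_mod_cast this
  refine ⟨t, htT, ?_⟩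
  rw [div_eq_div_iff htpos.ne' hNpos.ne']
  linarith

/-- If `p = 1/N`, the running loss count `ℓ_t` of a binary sequence satisfies
`ℓ_N ≥ 1`, and `ℓ_T/T ≤ p` for some `T ≥ N`, then the proportion of losses hits
`p` exactly at some time `T̃ ≤ T`. -/
theorem stmt6 (N : ℕ) (hN : 1 ≤ N) (ℓ : ℕ → ℕ) (h0 : ℓ 0 = 0)
    (hstep : ∀ t, ℓ (t + 1) = ℓ t ∨ ℓ (t + 1) = ℓ t + 1)
    (hℓN : 1 ≤ ℓ N) (T : ℕ) (hT : N ≤ T)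
    (hle : (ℓ T : ℝ) / T ≤ 1 / N) :
    ∃ T' ≤ T, (ℓ T' : ℝ) / T' = 1 / N :=
  stmt6_general N hN ℓ hstep hℓN T hT hle
end

section
/- Let α ∈ (0,1), N = ⌈√(2π·e^{1/6})/α⌉ and p = 1/N. For any binary sequence with running loss counts ℓ_t, if (1 + ℓ_T)/(T+1) ≤ p for some T, then there exists T̃ ≤ T with W_{T̃}^p(ℓ_{T̃}) ≥ 1/α, where W_t^p(ℓ) = (t+1)·p^ℓ·(1−p)^{t−ℓ}·C(t,ℓ). -/
/-!
With `p = 1/N`, the first time `t` at which `N (ℓ_t + 1) ≤ t + 1` holds it holds with equality,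
because `ℓ` grows by at most one per step. If no loss has occurred by then, `t = N - 1` and the
wealth is `N (1 - 1/N)^(N-1) ≥ N/e`. Otherwise `ℓ_t = L ≥ 1`, and at time `NL` the loss count is
already `L`, so the empirical loss frequency there is exactly `p`. The wealth at that time is
`NL + 1` times the binomial probability at its mode; for `L = 1` it dominates the previous case,
and for `L ≥ 2` the Stirling bounds `√(2πn) (n/e)^n ≤ n! ≤ e √n (n/e)^n` give at least
`N √(2πL) / e² ≥ N √(4π) / e² ≥ N/e`. Finally `√(2π e^(1/6)) ≥ e`, so `N/e ≥ 1/α`.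
-/

open Real Nat

def wealth (p : ℝ) (t l : ℕ) : ℝ :=
  (t + 1) * p ^ l * (1 - p) ^ (t - l) * t.choose l

lemma exp_one_le_sqrt_two_pi_mul_exp_one_div_six : exp 1 ≤ √(2 * π * exp (1 / 6)) := by
  have hexp : 1 + 1 / 6 + (1 / 6) ^ 2 / 2 ≤ exp (1 / 6 : ℝ) :=
    quadratic_le_exp_of_nonneg (by norm_num)
  rw [← sqrt_sq (exp_pos 1).le]
  gcongr
  nlinarith [exp_one_lt_d9, exp_pos 1, pi_gt_d6]

lemma exp_one_sq_le_four_pi : exp 1 ^ 2 ≤ 4 * π := by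
  nlinarith [exp_one_lt_d9, exp_pos 1, pi_gt_three]

lemma exp_neg_one_le_one_sub_one_div_pow_pred (N : ℕ) :
    exp (-1) ≤ (1 - 1 / N : ℝ) ^ (N - 1) := by
  rcases N with _ | _ | M
  · simp
  · simp
  · have h : (1 - 1 / (M + 1 + 1 : ℕ) : ℝ) = (1 + ((M + 1 : ℕ) : ℝ)⁻¹)⁻¹ := by
      push_cast; field_simp; ring
    rw [h, Nat.add_sub_cancel, inv_pow, exp_neg]
    exact inv_anti₀ (by positivity) one_add_inv_pow_le_exp

lemma factorial_le_exp_one_mul_sqrt_mul_pow {n : ℕ} (hn : n ≠ 0) :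
    (n ! : ℝ) ≤ exp 1 * √n * (n / exp 1) ^ n := by
  obtain ⟨m, rfl⟩ := Nat.exists_eq_add_one_of_ne_zero hn
  have h : Stirling.stirlingSeq (m + 1) ≤ exp 1 / √2 := by
    simpa [Stirling.stirlingSeq_one] using Stirling.stirlingSeq'_antitone (Nat.zero_le m)
  rw [Stirling.stirlingSeq, div_le_div_iff₀ (by positivity) (by positivity)] at h
  rw [← mul_le_mul_iff_of_pos_right (by positivity : (0 : ℝ) < √2)]
  calc _ ≤ exp 1 * (√(2 * (m + 1 : ℕ)) * ((m + 1 : ℕ) / exp 1) ^ (m + 1)) := h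
    _ = _ := by rw [sqrt_mul (by norm_num)]; ring

lemma sqrt_two_pi_div_le_choose_mul_pow {k j : ℕ} (hk : k ≠ 0) (hj : j ≠ 0) :
    √(2 * π * (k + j)) / (exp 1 ^ 2 * √(k * j)) ≤
      (k + j).choose k * ((k : ℝ) / (k + j)) ^ k * ((j : ℝ) / (k + j)) ^ j := by
  have hk' : (0 : ℝ) < k := by positivity
  have hj' : (0 : ℝ) < j := by positivity
  have hlow := Stirling.le_factorial_stirling (k + j)
  have hk! := factorial_le_exp_one_mul_sqrt_mul_pow hk
  have hj! := factorial_le_exp_one_mul_sqrt_mul_pow hj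
  push_cast at hlow
  have hk_pow : ((k + j) / exp 1) ^ k * ((k : ℝ) / (k + j)) ^ k = (k / exp 1) ^ k := by
    rw [← mul_pow]; field_simp
  have hj_pow : ((k + j) / exp 1) ^ j * ((j : ℝ) / (k + j)) ^ j = (j / exp 1) ^ j := by
    rw [← mul_pow]; field_simp
  calc √(2 * π * (k + j)) / (exp 1 ^ 2 * √(k * j))
      = √(2 * π * (k + j)) * (((k + j) / exp 1) ^ k * ((k : ℝ) / (k + j)) ^ k)
          * (((k + j) / exp 1) ^ j * ((j : ℝ) / (k + j)) ^ j)
          / ((exp 1 * √k * (k / exp 1) ^ k) * (exp 1 * √j * (j / exp 1) ^ j)) := by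
        rw [hk_pow, hj_pow, sqrt_mul hk'.le]
        field_simp
    _ = √(2 * π * (k + j)) * ((k + j) / exp 1) ^ (k + j) * ((k : ℝ) / (k + j)) ^ k
          * ((j : ℝ) / (k + j)) ^ j
          / ((exp 1 * √k * (k / exp 1) ^ k) * (exp 1 * √j * (j / exp 1) ^ j)) := by
        ring
    _ ≤ (k + j)! * ((k : ℝ) / (k + j)) ^ k * ((j : ℝ) / (k + j)) ^ j / (k ! * j !) := by
        gcongr
    _ = _ := by
        rw [Nat.cast_choose ℝ (Nat.le_add_right k j), Nat.add_sub_cancel_left]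
        ring

lemma div_exp_one_le_mul_sqrt_div {x l : ℝ} (hx : 1 < x) (hl : 2 ≤ l) :
    x / exp 1 ≤ (x * l + 1) * (√(2 * π * (x * l)) / (exp 1 ^ 2 * √(l * ((x - 1) * l)))) := by
  have hpos : 0 < l * ((x - 1) * l) := mul_pos (by linarith) (mul_pos (by linarith) (by linarith))
  have hexp : exp 1 ^ 2 * (x - 1) ≤ 2 * π * x * l := calc
    exp 1 ^ 2 * (x - 1) ≤ 4 * π * (x - 1) :=
      mul_le_mul_of_nonneg_right exp_one_sq_le_four_pi (by linarith)
    _ ≤ 2 * π * x * l := by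
      nlinarith [pi_pos, mul_nonneg (mul_nonneg pi_pos.le (by linarith : 0 ≤ x))
        (by linarith : 0 ≤ l - 2)]
  have hsqrt : exp 1 * √(l * ((x - 1) * l)) ≤ l * √(2 * π * (x * l)) := by
    rw [← pow_le_pow_iff_left₀ (by positivity) (by positivity) two_ne_zero, mul_pow, mul_pow,
      sq_sqrt hpos.le, sq_sqrt (by nlinarith [pi_pos])]
    nlinarith [mul_le_mul_of_nonneg_left hexp (sq_nonneg l)]
  have hs : 0 < √(l * ((x - 1) * l)) := sqrt_pos.2 hpos
  generalize √(l * ((x - 1) * l)) = s at hs hsqrt ⊢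
  calc x / exp 1 = x * (exp 1 * s) / (exp 1 ^ 2 * s) := by field_simp
    _ ≤ x * (l * √(2 * π * (x * l))) / (exp 1 ^ 2 * s) := by gcongr
    _ ≤ (x * l + 1) * (√(2 * π * (x * l)) / (exp 1 ^ 2 * s)) := by
        rw [← mul_div_assoc, ← mul_assoc]
        gcongr
        linarith

lemma exists_crossing_time {N : ℕ} (hN : 0 < N) {ℓ : ℕ → ℕ} (h0 : ℓ 0 = 0)
    (hstep : ∀ t, ℓ (t + 1) = ℓ t ∨ ℓ (t + 1) = ℓ t + 1) {T : ℕ}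
    (hT : N * (ℓ T + 1) ≤ T + 1) :
    ∃ m ≤ T, (ℓ m = 0 ∧ m + 1 = N) ∨ (0 < ℓ m ∧ m = N * ℓ m) := by
  have hmono : Monotone ℓ :=
    monotone_nat_of_le_succ fun t => by rcases hstep t with h | h <;> omega
  have hex : ∃ t, N * (ℓ t + 1) ≤ t + 1 := ⟨T, hT⟩
  set s := Nat.find hex
  have hs : N * (ℓ s + 1) ≤ s + 1 := Nat.find_spec hex
  have hsT : s ≤ T := Nat.find_min' hex hT
  have hmin : ∀ t < s, t + 1 < N * (ℓ t + 1) := fun t ht => not_le.1 (Nat.find_min hex ht)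
  have hs_eq : N * (ℓ s + 1) = s + 1 := by
    by_cases hs0 : s = 0
    · rw [hs0, h0] at hs ⊢; omega
    obtain ⟨r, hr⟩ := Nat.exists_eq_add_one_of_ne_zero hs0
    have hprev := hmin r (by omega)
    rw [hr] at hs ⊢
    rcases hstep r with h | h <;> rw [h] at hs ⊢
    · omega
    · nlinarith
  rcases Nat.eq_zero_or_pos (ℓ s) with hℓs | hℓs
  · exact ⟨s, hsT, Or.inl ⟨hℓs, by rw [hℓs] at hs_eq; omega⟩⟩
  · have hN2 : 1 < N := by
      have hs0 : s ≠ 0 := fun h => by simp [h, h0] at hℓs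
      simpa [h0] using hmin 0 (Nat.pos_of_ne_zero hs0)
    have hlt : N * ℓ s < s := by nlinarith
    have hdown : ℓ s ≤ ℓ (N * ℓ s) := by
      by_contra! h
      have := hmin _ hlt
      nlinarith
    have hfix : ℓ (N * ℓ s) = ℓ s := le_antisymm (hmono hlt.le) hdown
    exact ⟨N * ℓ s, by omega, Or.inr ⟨hfix.symm ▸ hℓs, by rw [hfix]⟩⟩

lemma div_exp_one_le_mul_one_sub_one_div_pow_pred (N : ℕ) :
    N / exp 1 ≤ N * (1 - 1 / N : ℝ) ^ (N - 1) := by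
  rw [div_eq_mul_inv, ← exp_neg]
  gcongr
  exact exp_neg_one_le_one_sub_one_div_pow_pred N

lemma wealth_pred_zero {N : ℕ} (hN : 0 < N) :
    wealth (1 / N) (N - 1) 0 = N * (1 - 1 / N : ℝ) ^ (N - 1) := by
  simp [wealth, Nat.cast_pred hN]

lemma wealth_self_one {N : ℕ} (hN : 0 < N) :
    wealth (1 / N) N 1 = (N + 1) * (1 - 1 / N : ℝ) ^ (N - 1) := by
  simp only [wealth, pow_one, Nat.choose_one_right]
  field_simp

lemma div_exp_one_le_wealth_mul_of_two_le {N L : ℕ} (hN : 2 ≤ N) (hL : 2 ≤ L) :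
    N / exp 1 ≤ wealth (1 / N) (N * L) L := by
  obtain ⟨j, hj⟩ : ∃ j, N * L = L + j := ⟨(N - 1) * L, by
    rw [Nat.sub_mul, one_mul, Nat.add_sub_cancel' (Nat.le_mul_of_pos_left L (by omega))]⟩
  have hN' : (1 : ℝ) < N := by exact_mod_cast hN
  have hjR : (j : ℝ) = (N - 1) * L := by
    have := congrArg (Nat.cast (R := ℝ)) hj
    push_cast at this
    linarith
  have hj0 : j ≠ 0 := by
    rintro rfl
    nlinarith
  have hLjR : (L : ℝ) + j = N * L := by rw [hjR]; ring
  have hp : (L : ℝ) / (L + j) = 1 / N := by rw [hLjR]; field_simp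
  have hq : (j : ℝ) / (L + j) = 1 - 1 / N := by rw [hLjR, hjR]; field_simp
  have hmode := sqrt_two_pi_div_le_choose_mul_pow (by omega : L ≠ 0) hj0
  rw [hp, hq, ← hj, hLjR, hjR] at hmode
  calc (N : ℝ) / exp 1
      ≤ (N * L + 1) * (√(2 * π * (N * L)) / (exp 1 ^ 2 * √(L * ((N - 1) * L)))) :=
        div_exp_one_le_mul_sqrt_div hN' (by exact_mod_cast hL)
    _ ≤ (N * L + 1) * ((N * L).choose L * (1 / N) ^ L * (1 - 1 / N) ^ j) := by gcongr
    _ = wealth (1 / N) (N * L) L := by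
        rw [wealth, hj, Nat.add_sub_cancel_left, ← hj]
        push_cast
        ring

lemma div_exp_one_le_wealth_mul {N L : ℕ} (hN : 2 ≤ N) (hL : 0 < L) :
    N / exp 1 ≤ wealth (1 / N) (N * L) L := by
  rcases (Nat.one_le_iff_ne_zero.2 hL.ne').eq_or_lt with rfl | hL
  · rw [mul_one, wealth_self_one (by omega)]
    refine (div_exp_one_le_mul_one_sub_one_div_pow_pred N).trans ?_
    have : (0 : ℝ) ≤ 1 - 1 / N := by
      rw [sub_nonneg, div_le_one (by positivity)]
      exact_mod_cast (by omega : 1 ≤ N)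
    gcongr
    linarith
  · exact div_exp_one_le_wealth_mul_of_two_le hN hL

/-- If the permutation p-value `(1+ℓ_T)/(T+1)` drops to `p = 1/⌈√(2π e^{1/6})/α⌉`
or below at some time `T`, then the binomial-strategy wealth with parameter `p`
reaches `1/α` at some time `T̃ ≤ T`. -/
theorem stmt7 (α : ℝ) (hα0 : 0 < α) (hα1 : α < 1)
    (N : ℕ) (hN : N = ⌈Real.sqrt (2 * Real.pi * Real.exp (1 / 6)) / α⌉₊)
    (ℓ : ℕ → ℕ) (h0 : ℓ 0 = 0)
    (hstep : ∀ t, ℓ (t + 1) = ℓ t ∨ ℓ (t + 1) = ℓ t + 1)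
    (T : ℕ) (hT : (1 + (ℓ T : ℝ)) / ((T : ℝ) + 1) ≤ 1 / N) :
    ∃ T' ≤ T,
      ((T' : ℝ) + 1) * ((1 : ℝ) / N) ^ (ℓ T') * (1 - 1 / (N : ℝ)) ^ (T' - ℓ T')
          * (Nat.choose T' (ℓ T') : ℝ)
        ≥ 1 / α := by
  have hNα : exp 1 / α ≤ N := hN ▸ (div_le_div_of_nonneg_right
    exp_one_le_sqrt_two_pi_mul_exp_one_div_six hα0.le).trans (Nat.le_ceil _)
  have hN2 : 2 ≤ N := by
    have : (2 : ℝ) < N := calc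
      (2 : ℝ) < exp 1 := lt_trans (by norm_num) exp_one_gt_d9
      _ < exp 1 / α := (lt_div_iff₀ hα0).2 (by nlinarith [exp_pos 1])
      _ ≤ N := hNα
    exact_mod_cast this.le
  have hα : 1 / α ≤ N / exp 1 := by
    rwa [le_div_iff₀ (exp_pos 1), one_div_mul_eq_div]
  have hT' : N * (ℓ T + 1) ≤ T + 1 := by
    rw [div_le_div_iff₀ (by positivity) (by positivity), one_mul, add_comm] at hT
    rw [mul_comm]
    exact_mod_cast hT
  obtain ⟨m, hmT, hm⟩ := exists_crossing_time (by omega) h0 hstep hT'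
  refine ⟨m, hmT, hα.trans ?_⟩
  change N / exp 1 ≤ wealth (1 / N) m (ℓ m)
  rcases hm with ⟨hℓ, hm⟩ | ⟨hℓ, hm⟩
  · rw [hℓ, show m = N - 1 by omega, wealth_pred_zero (by omega)]
    exact div_exp_one_le_mul_one_sub_one_div_pow_pred N
  · generalize ℓ m = L at hℓ hm ⊢
    subst hm
    exact div_exp_one_le_wealth_mul hN2 hℓ
end

section
/- Let I_1, I_2, ... be i.i.d. Bernoulli(q) with q ∈ [0, c), c ∈ (0,1), and L_T = ∑_{t≤T} I_t. Then the binomial-mixture wealth W̄_T = (1 − Bin(L_T; T+1, c))/c converges almost surely to 1/c as T → ∞. If instead q ∈ (c, 1], then W̄_T → 0 almost surely. -/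
/-! `bernstein n i c` is the Binomial(n, c) probability of `i`, so `Bin(L; T+1, c)` is
`∑ i ∈ range (L + 1), bernstein (T + 1) i c`. The variance identity `bernstein.variance` gives
Chebyshev's bound `c(1-c)/(δ² n)` on the Binomial(n, c) mass at distance `≥ δ n` from `c n`.
By the strong law `L_T/(T+1) → q` almost surely; for `q < c` the CDF at `L_T` is then
eventually a lower tail and tends to `0`, for `q > c` its complement is eventually an upper
tail and the CDF tends to `1`. -/

open MeasureTheory ProbabilityTheory Finset Filter Topology

namespace bernstein

open unitInterval

variable {n : ℕ} {x : I}

lemma eq_zero_of_lt {i : ℕ} (h : n < i) : bernstein n i x = 0 := by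
  simp [bernstein_apply, Nat.choose_eq_zero_of_lt h]

lemma sum_range_eq_one (n : ℕ) (x : I) : ∑ i ∈ range (n + 1), bernstein n i x = 1 := by
  rw [← Fin.sum_univ_eq_sum_range (fun i => bernstein n i x), probability]

lemma sum_range_le_one (m : ℕ) : ∑ i ∈ range m, bernstein n i x ≤ 1 :=
  calc ∑ i ∈ range m, bernstein n i x
      = ∑ i ∈ range m with i ≤ n, bernstein n i x :=
        (sum_filter_of_ne fun _ _ h => not_lt.1 (h ∘ eq_zero_of_lt)).symm
    _ ≤ ∑ i ∈ range (n + 1), bernstein n i x :=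
        sum_le_sum_of_subset_of_nonneg (fun i hi => by simp only [mem_filter, mem_range] at hi ⊢; omega)
          fun _ _ _ => bernstein_nonneg
    _ = 1 := sum_range_eq_one n x

lemma variance_range (hn : n ≠ 0) (x : I) :
    ∑ i ∈ range (n + 1), ((x : ℝ) - i / n) ^ 2 * bernstein n i x = x * (1 - x) / n := by
  rw [← variance hn x,
    ← Fin.sum_univ_eq_sum_range (fun i => ((x : ℝ) - i / n) ^ 2 * bernstein n i x)]
  rfl

lemma sum_filter_le_abs_sub_le (hn : n ≠ 0) (x : I) {δ : ℝ} (hδ : 0 < δ) :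
    ∑ i ∈ range (n + 1) with δ ≤ |(x : ℝ) - (i : ℕ) / n|, bernstein n i x ≤
      x * (1 - x) / δ ^ 2 / n := by
  rw [div_right_comm, le_div_iff₀ (by positivity), ← variance_range hn x, mul_comm, mul_sum]
  calc ∑ i ∈ range (n + 1) with δ ≤ |(x : ℝ) - (i : ℕ) / n|, δ ^ 2 * bernstein n i x
      ≤ ∑ i ∈ range (n + 1) with δ ≤ |(x : ℝ) - (i : ℕ) / n|,
          ((x : ℝ) - i / n) ^ 2 * bernstein n i x := by
        refine sum_le_sum fun i hi => mul_le_mul_of_nonneg_right ?_ bernstein_nonneg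
        rw [← sq_abs ((x : ℝ) - _)]
        exact pow_le_pow_left₀ hδ.le (mem_filter.1 hi).2 2
    _ ≤ _ := sum_le_sum_of_subset_of_nonneg (filter_subset _ _) fun _ _ _ => by positivity

lemma sum_range_le_of_le_sub (hn : n ≠ 0) {δ : ℝ} (hδ : 0 < δ) {k : ℕ}
    (hk : (k : ℝ) ≤ (x - δ) * n) :
    ∑ i ∈ range (k + 1), bernstein n i x ≤ x * (1 - x) / δ ^ 2 / n := by
  have hn' : (0 : ℝ) < n := by positivity
  refine le_trans (sum_le_sum_of_subset_of_nonneg (fun i hi => ?_) fun _ _ _ => bernstein_nonneg)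
    (sum_filter_le_abs_sub_le hn x hδ)
  have hik : (i : ℝ) ≤ k := by exact_mod_cast mem_range_succ_iff.1 hi
  have hin : (i : ℝ) / n ≤ x - δ := (div_le_iff₀ hn').2 (hik.trans hk)
  have hx : (x : ℝ) ≤ 1 := x.2.2
  refine mem_filter.2 ⟨mem_range_succ_iff.2 ?_, ?_⟩
  · exact_mod_cast hik.trans (hk.trans (mul_le_of_le_one_left hn'.le (by linarith)))
  · exact le_abs.2 (Or.inl (by linarith))

lemma one_sub_sum_range_le_of_add_le (hn : n ≠ 0) {δ : ℝ} (hδ : 0 < δ) {k : ℕ}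
    (hk : (x + δ) * n ≤ k) :
    1 - ∑ i ∈ range (k + 1), bernstein n i x ≤ x * (1 - x) / δ ^ 2 / n := by
  have hn' : (0 : ℝ) < n := by positivity
  have hsplit := sum_range_eq_one n x
  rw [← sum_filter_add_sum_filter_not _ (· ≤ k)] at hsplit
  have hle : ∑ i ∈ range (n + 1) with i ≤ k, bernstein n i x ≤
      ∑ i ∈ range (k + 1), bernstein n i x :=
    sum_le_sum_of_subset_of_nonneg (fun i hi => mem_range_succ_iff.2 (mem_filter.1 hi).2)
      fun _ _ _ => bernstein_nonneg
  have hgt :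
      ∑ i ∈ range (n + 1) with ¬i ≤ k, bernstein n i x ≤ x * (1 - x) / δ ^ 2 / n := by
    refine le_trans
      (sum_le_sum_of_subset_of_nonneg (fun i hi => ?_) fun _ _ _ => bernstein_nonneg)
      (sum_filter_le_abs_sub_le hn x hδ)
    obtain ⟨hi, hki⟩ := mem_filter.1 hi
    have hki : (k : ℝ) ≤ i := by exact_mod_cast (not_le.1 hki).le
    have hin : x + δ ≤ (i : ℝ) / n := (le_div_iff₀ hn').2 (hk.trans hki)
    exact mem_filter.2 ⟨hi, le_abs.2 (Or.inr (by linarith))⟩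
  linarith

variable {ι : Type*} {l : Filter ι} {m k : ι → ℕ} {q : ℝ}

lemma tendsto_sum_range_of_lt (hm : Tendsto m l atTop)
    (hk : Tendsto (fun j => (k j : ℝ) / m j) l (𝓝 q)) (hqx : q < x) :
    Tendsto (fun j => ∑ i ∈ range (k j + 1), bernstein (m j) i x) l (𝓝 0) := by
  obtain ⟨δ, hδ, hqδ⟩ : ∃ δ > 0, q < x - δ := ⟨(x - q) / 2, by linarith, by linarith⟩
  refine tendsto_of_tendsto_of_tendsto_of_le_of_le' tendsto_const_nhds
    ((tendsto_const_div_atTop_nhds_zero_nat (x * (1 - x) / δ ^ 2)).comp hm)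
    (Eventually.of_forall fun _ => sum_nonneg fun _ _ => bernstein_nonneg) ?_
  filter_upwards [hk.eventually_le_const hqδ, hm.eventually_ne_atTop 0] with j hkj hmj
  exact sum_range_le_of_le_sub hmj hδ ((div_le_iff₀ (by positivity)).1 hkj)

lemma tendsto_sum_range_of_gt (hm : Tendsto m l atTop)
    (hk : Tendsto (fun j => (k j : ℝ) / m j) l (𝓝 q)) (hxq : x < q) :
    Tendsto (fun j => ∑ i ∈ range (k j + 1), bernstein (m j) i x) l (𝓝 1) := by
  obtain ⟨δ, hδ, hδq⟩ : ∃ δ > 0, x + δ < q := ⟨(q - x) / 2, by linarith, by linarith⟩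
  have hbound :=
    ((tendsto_const_div_atTop_nhds_zero_nat (x * (1 - x) / δ ^ 2)).comp hm).const_sub 1
  rw [sub_zero] at hbound
  refine tendsto_of_tendsto_of_tendsto_of_le_of_le' hbound tendsto_const_nhds ?_
    (Eventually.of_forall fun _ => sum_range_le_one _)
  filter_upwards [hk.eventually_const_le hδq, hm.eventually_ne_atTop 0] with j hkj hmj
  have := one_sub_sum_range_le_of_add_le hmj hδ ((le_div_iff₀ (by positivity)).1 hkj)
  simp only [Function.comp_apply]
  linarith

end bernstein

section Frequency

variable {Ω : Type*} [MeasurableSpace Ω] {μ : Measure Ω} [IsFiniteMeasure μ]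

lemma identDistrib_of_measure_eq_true {X Y : Ω → Bool} (hX : Measurable X) (hY : Measurable Y)
    (h : μ {ω | X ω} = μ {ω | Y ω}) : IdentDistrib X Y μ μ := by
  have hfalse : ∀ Z : Ω → Bool, Z ⁻¹' {false} = {ω | Z ω}ᶜ := fun Z => by ext; simp
  refine ⟨hX.aemeasurable, hY.aemeasurable,
    Measure.ext_of_singleton (Bool.forall_bool.2 ⟨?_, ?_⟩)⟩
  · rw [Measure.map_apply hX (measurableSet_singleton _),
      Measure.map_apply hY (measurableSet_singleton _), hfalse, hfalse,
      measure_compl (s := {ω | X ω}) (hX (measurableSet_singleton true)) (measure_ne_top _ _),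
      measure_compl (s := {ω | Y ω}) (hY (measurableSet_singleton true)) (measure_ne_top _ _), h]
  · rwa [Measure.map_apply hX (measurableSet_singleton _),
      Measure.map_apply hY (measurableSet_singleton _)]

theorem ae_tendsto_card_filter_div {I : ℕ → Ω → Bool} (hmeas : ∀ t, Measurable (I t))
    (hindep : Pairwise fun s t => IndepFun (I s) (I t) μ)
    (hprob : ∀ t, μ {ω | I t ω} = μ {ω | I 0 ω}) :
    ∀ᵐ ω ∂μ, Tendsto (fun T : ℕ => (#{s ∈ range T | I s ω} : ℝ) / T) atTop
      (𝓝 (μ.real {ω | I 0 ω})) := by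
  set X : ℕ → Ω → ℝ := fun t => {ω | I t ω}.indicator 1
  set f : Bool → ℝ := fun b => if b then 1 else 0
  have hf : Measurable f := measurable_from_top
  have hX : ∀ t, X t = f ∘ I t := fun t => by
    ext ω; simp [X, f, Set.indicator_apply]
  have hset : MeasurableSet {ω | I 0 ω} := hmeas 0 (measurableSet_singleton true)
  have hlaw := strong_law_ae_real X ((integrable_const 1).indicator hset)
    (fun s t hst => by simpa only [Function.onFun, hX] using (hindep hst).comp hf hf)
    (fun t => by simpa only [hX] using (identDistrib_of_measure_eq_true (hmeas t) (hmeas 0)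
      (hprob t)).comp hf)
  rw [integral_indicator_one hset] at hlaw
  filter_upwards [hlaw] with ω hω
  simpa [X, Set.indicator_apply] using hω

end Frequency

lemma Filter.Tendsto.div_natCast_succ {a : ℕ → ℝ} {q : ℝ}
    (h : Tendsto (fun T : ℕ => a T / T) atTop (𝓝 q)) :
    Tendsto (fun T : ℕ => a T / ((T + 1 : ℕ) : ℝ)) atTop (𝓝 q) := by
  have := h.mul (tendsto_natCast_div_add_atTop (1 : ℝ))
  rw [mul_one] at this
  refine this.congr' ((eventually_ne_atTop 0).mono fun T hT => ?_)
  push_cast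
  field_simp

theorem stmt11_general {Ω : Type*} [MeasurableSpace Ω] (μ : Measure Ω) [IsProbabilityMeasure μ]
    (q c : ℝ) (hq0 : 0 ≤ q) (hc0 : 0 < c) (hc1 : c < 1)
    (I : ℕ → Ω → Bool) (hmeas : ∀ t, Measurable (I t))
    (hindep : ProbabilityTheory.iIndepFun I μ)
    (hq : ∀ t, μ {ω | I t ω = true} = ENNReal.ofReal q)
    (L : ℕ → Ω → ℕ)
    (hL : ∀ T ω, L T ω = ((Finset.range T).filter (fun s => I s ω = true)).card)
    (Wbar : ℕ → Ω → ℝ)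
    (hW : ∀ T ω, Wbar T ω =
      (1 - ∑ i ∈ Finset.range (L T ω + 1),
          (Nat.choose (T + 1) i : ℝ) * c ^ i * (1 - c) ^ (T + 1 - i)) / c) :
    (q < c → ∀ᵐ ω ∂μ,
        Filter.Tendsto (fun T => Wbar T ω) Filter.atTop (nhds (1 / c)))
      ∧ (c < q → ∀ᵐ ω ∂μ,
        Filter.Tendsto (fun T => Wbar T ω) Filter.atTop (nhds 0)) := by
  set x : unitInterval := ⟨c, hc0.le, hc1.le⟩
  have hWx : ∀ T ω,
      Wbar T ω = (1 - ∑ i ∈ range (L T ω + 1), bernstein (T + 1) i x) / c := by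
    simp [hW, bernstein_apply, x]
  have hfreq :
      ∀ᵐ ω ∂μ, Tendsto (fun T => (L T ω : ℝ) / ((T + 1 : ℕ) : ℝ)) atTop (𝓝 q) := by
    have hlaw := ae_tendsto_card_filter_div hmeas (fun s t hst => hindep.indepFun hst)
      (fun t => (hq t).trans (hq 0).symm)
    rw [measureReal_def, hq 0, ENNReal.toReal_ofReal hq0] at hlaw
    filter_upwards [hlaw] with ω hω
    simpa only [hL] using hω.div_natCast_succ
  have hm : Tendsto (fun T : ℕ => T + 1) atTop atTop := tendsto_add_atTop_nat 1
  refine ⟨fun hqc => ?_, fun hcq => ?_⟩ <;> filter_upwards [hfreq] with ω hω <;>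
    simp only [hWx]
  · simpa using ((bernstein.tendsto_sum_range_of_lt hm hω hqc).const_sub 1).div_const c
  · simpa using ((bernstein.tendsto_sum_range_of_gt hm hω hcq).const_sub 1).div_const c

/-- Almost-sure limit of the binomial-mixture wealth
`W̄_T = (1 − Bin(L_T; T+1, c))/c` for i.i.d. Bernoulli(q) loss indicators:
it tends to `1/c` if `q < c` and to `0` if `q > c`. -/
theorem stmt11 {Ω : Type*} [MeasurableSpace Ω] (μ : Measure Ω) [IsProbabilityMeasure μ]
    (q c : ℝ) (hq0 : 0 ≤ q) (hq1 : q ≤ 1) (hc0 : 0 < c) (hc1 : c < 1)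
    (I : ℕ → Ω → Bool) (hmeas : ∀ t, Measurable (I t))
    (hindep : ProbabilityTheory.iIndepFun I μ)
    (hq : ∀ t, μ {ω | I t ω = true} = ENNReal.ofReal q)
    (L : ℕ → Ω → ℕ)
    (hL : ∀ T ω, L T ω = ((Finset.range T).filter (fun s => I s ω = true)).card)
    (Wbar : ℕ → Ω → ℝ)
    (hW : ∀ T ω, Wbar T ω =
      (1 - ∑ i ∈ Finset.range (L T ω + 1),
          (Nat.choose (T + 1) i : ℝ) * c ^ i * (1 - c) ^ (T + 1 - i)) / c) :
    (q < c → ∀ᵐ ω ∂μ,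
        Filter.Tendsto (fun T => Wbar T ω) Filter.atTop (nhds (1 / c)))
      ∧ (c < q → ∀ᵐ ω ∂μ,
        Filter.Tendsto (fun T => Wbar T ω) Filter.atTop (nhds 0)) :=
  stmt11_general μ q c hq0 hc0 hc1 I hmeas hindep hq L hL Wbar hW
end

section
/- With E_t defined by the backward recursion E_{t−1}(ℓ) = ((ℓ+1)/(t+1))·E_t(ℓ+1) + ((t−ℓ)/(t+1))·E_t(ℓ) from a terminal function E_T with ∑_ℓ E_T(ℓ) = T+1, and bets B_{t|ℓ}(0) = E_t(ℓ)/E_{t−1}(ℓ), B_{t|ℓ}(1) = E_t(ℓ+1)/E_{t−1}(ℓ) (with convention 0/0 = 0), each bet satisfies the fairness constraint B_{t|ℓ}(0)·(t−ℓ)/(t+1) + B_{t|ℓ}(1)·(ℓ+1)/(t+1) = 1 whenever E_{t−1}(ℓ) > 0, and for any binary sequence i_1,...,i_T with running loss counts L_t, the product ∏_{t=1}^T B_{t|L_{t−1}}(i_t) = E_T(L_T) whenever all intermediate E values are positive. -/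
/-!
Along a path, the bet placed at time `t` is `E (t+1) (L (t+1)) / E t (L t)`, so the product of
the bets telescopes to `E T (L T) / E 0 0`. The backward recursion is an average of
`E (t+1)` that preserves `(∑ ℓ, E t ℓ) / (t+1)`, so `E 0 0 = 1` follows from `∑ ℓ, E T ℓ = T+1`;
fairness of each bet is the recursion divided by `E t ℓ`.
-/

open Finset

theorem eq_prod_range_div_of_ne_zero {G₀ : Type*} [CommGroupWithZero G₀] (f : ℕ → G₀) (n : ℕ)
    (hf : ∀ t < n, f t ≠ 0) : f n = f 0 * ∏ t ∈ range n, f (t + 1) / f t := by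
  induction n with
  | zero => simp
  | succ n ih =>
    rw [prod_range_succ, ← mul_assoc, ← ih fun t ht => hf t (by omega),
      mul_div_cancel₀ _ (hf n n.lt_succ_self)]

theorem sum_range_of_backward_step (n : ℕ) (f g : ℕ → ℝ)
    (hfg : ∀ ℓ ≤ n, f ℓ = ((ℓ : ℝ) + 1) / ((n : ℝ) + 2) * g (ℓ + 1)
      + ((n : ℝ) + 1 - ℓ) / ((n : ℝ) + 2) * g ℓ) :
    ((n : ℝ) + 2) * ∑ ℓ ∈ range (n + 1), f ℓ = ((n : ℝ) + 1) * ∑ ℓ ∈ range (n + 2), g ℓ := by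
  have hn : ((n : ℝ) + 2) ≠ 0 := by positivity
  have hup : ∑ ℓ ∈ range (n + 1), ((ℓ : ℝ) + 1) * g (ℓ + 1)
      = ∑ ℓ ∈ range (n + 2), (ℓ : ℝ) * g ℓ := by
    rw [sum_range_succ' _ (n + 1)]
    push_cast
    ring
  have hstay : ∑ ℓ ∈ range (n + 1), ((n : ℝ) + 1 - ℓ) * g ℓ
      = ∑ ℓ ∈ range (n + 2), ((n : ℝ) + 1 - ℓ) * g ℓ := by
    rw [sum_range_succ _ (n + 1)]
    push_cast
    ring
  calc ((n : ℝ) + 2) * ∑ ℓ ∈ range (n + 1), f ℓ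
      = ∑ ℓ ∈ range (n + 1), (((ℓ : ℝ) + 1) * g (ℓ + 1) + ((n : ℝ) + 1 - ℓ) * g ℓ) := by
        rw [mul_sum]
        refine sum_congr rfl fun ℓ hℓ => ?_
        rw [hfg ℓ (Nat.lt_succ_iff.mp (mem_range.mp hℓ))]
        field_simp
    _ = ∑ ℓ ∈ range (n + 2), ((ℓ : ℝ) * g ℓ + ((n : ℝ) + 1 - ℓ) * g ℓ) := by
        rw [sum_add_distrib, sum_add_distrib, hup, hstay]
    _ = ((n : ℝ) + 1) * ∑ ℓ ∈ range (n + 2), g ℓ := by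
        rw [mul_sum]
        exact sum_congr rfl fun ℓ _ => by ring

theorem sum_range_eq_of_backward_recursion (T : ℕ) (E : ℕ → ℕ → ℝ)
    (hsum : ∑ ℓ ∈ range (T + 1), E T ℓ = (T : ℝ) + 1)
    (hrec : ∀ t < T, ∀ ℓ ≤ t,
      E t ℓ = (((ℓ : ℝ) + 1) / ((t : ℝ) + 2)) * E (t + 1) (ℓ + 1)
        + (((t : ℝ) + 1 - ℓ) / ((t : ℝ) + 2)) * E (t + 1) ℓ)
    {t : ℕ} (ht : t ≤ T) : ∑ ℓ ∈ range (t + 1), E t ℓ = (t : ℝ) + 1 := by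
  induction ht using Nat.decreasingInduction with
  | self => exact hsum
  | of_succ t ht ih =>
    have hstep := sum_range_of_backward_step t (E t) (E (t + 1)) (hrec t ht)
    rw [ih] at hstep
    push_cast at hstep
    have ht2 : ((t : ℝ) + 2) ≠ 0 := by positivity
    exact mul_left_cancel₀ ht2 (by rw [hstep]; ring)

theorem fair_of_eq_add {a x y p q : ℝ} (ha : a ≠ 0) (h : a = p * y + q * x) :
    x / a * q + y / a * p = 1 := by
  rw [div_mul_eq_mul_div, div_mul_eq_mul_div, ← add_div, div_eq_one_iff_eq ha, h]
  ring

theorem stmt14_general (T : ℕ) (E : ℕ → ℕ → ℝ)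
    (hsum : ∑ ℓ ∈ Finset.range (T + 1), E T ℓ = (T : ℝ) + 1)
    (hrec : ∀ t < T, ∀ ℓ ≤ t,
      E t ℓ = (((ℓ : ℝ) + 1) / ((t : ℝ) + 2)) * E (t + 1) (ℓ + 1)
        + (((t : ℝ) + 1 - ℓ) / ((t : ℝ) + 2)) * E (t + 1) ℓ)
    (B : ℕ → ℕ → Bool → ℝ)
    (hB : ∀ t ℓ (b : Bool),
      B t ℓ b = (if b then E (t + 1) (ℓ + 1) else E (t + 1) ℓ) / E t ℓ) :
    (∀ t < T, ∀ ℓ ≤ t, 0 < E t ℓ →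
        B t ℓ false * (((t : ℝ) + 1 - ℓ) / ((t : ℝ) + 2))
          + B t ℓ true * (((ℓ : ℝ) + 1) / ((t : ℝ) + 2)) = 1)
      ∧ ∀ (i : ℕ → Bool) (L : ℕ → ℕ)
          (hL : ∀ t, L t = ((Finset.range t).filter (fun s => i s = true)).card),
          (∀ t ≤ T, 0 < E t (L t)) →
          ∏ t ∈ Finset.range T, B t (L t) (i t) = E T (L T) := by
  refine ⟨fun t ht ℓ hℓ hpos => ?_, fun i L hL hpos => ?_⟩
  · simpa [hB] using fair_of_eq_add hpos.ne' (hrec t ht ℓ hℓ)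
  · have hE00 : E 0 0 = 1 := by
      simpa using sum_range_eq_of_backward_recursion T E hsum hrec (Nat.zero_le T)
    have hL0 : L 0 = 0 := by simp [hL]
    have hbet : ∀ t, B t (L t) (i t) = E (t + 1) (L (t + 1)) / E t (L t) := by
      intro t
      have hLsucc : L (t + 1) = L t + if i t then 1 else 0 := by
        simp only [hL, ← Nat.count_eq_card_filter_range, Nat.count_succ]
      cases hit : i t <;> simp [hB, hLsucc, hit]
    rw [eq_prod_range_div_of_ne_zero (fun t => E t (L t)) T fun t ht => (hpos t ht.le).ne']
    simp [hbet, hL0, hE00]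

/-- Given a terminal betting function `E_T` with `∑_ℓ E_T(ℓ) = T+1` and the
backward recursion, the bets `B_{t|ℓ}(0) = E_{t+1}(ℓ)/E_t(ℓ)`,
`B_{t|ℓ}(1) = E_{t+1}(ℓ+1)/E_t(ℓ)` (convention `0/0 = 0`) satisfy the fairness
constraint wherever `E_t(ℓ) > 0`, and along any binary path with positive
intermediate `E` values the product of the bets recovers `E_T(L_T)`. -/
theorem stmt14 (T : ℕ) (E : ℕ → ℕ → ℝ)
    (hnonneg : ∀ ℓ ≤ T, 0 ≤ E T ℓ)
    (hsum : ∑ ℓ ∈ Finset.range (T + 1), E T ℓ = (T : ℝ) + 1)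
    (hrec : ∀ t < T, ∀ ℓ ≤ t,
      E t ℓ = (((ℓ : ℝ) + 1) / ((t : ℝ) + 2)) * E (t + 1) (ℓ + 1)
        + (((t : ℝ) + 1 - ℓ) / ((t : ℝ) + 2)) * E (t + 1) ℓ)
    (B : ℕ → ℕ → Bool → ℝ)
    (hB : ∀ t ℓ (b : Bool),
      B t ℓ b = (if b then E (t + 1) (ℓ + 1) else E (t + 1) ℓ) / E t ℓ) :
    (∀ t < T, ∀ ℓ ≤ t, 0 < E t ℓ →
        B t ℓ false * (((t : ℝ) + 1 - ℓ) / ((t : ℝ) + 2))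
          + B t ℓ true * (((ℓ : ℝ) + 1) / ((t : ℝ) + 2)) = 1)
      ∧ ∀ (i : ℕ → Bool) (L : ℕ → ℕ)
          (hL : ∀ t, L t = ((Finset.range t).filter (fun s => i s = true)).card),
          (∀ t ≤ T, 0 < E t (L t)) →
          ∏ t ∈ Finset.range T, B t (L t) (i t) = E T (L T) :=
  stmt14_general T E hsum hrec B hB
end

section
/- Let Y_0, Y_1, Y_2, ... be exchangeable random variables with almost surely no ties, and for h ≥ 1 define γ(h) = inf{t ≥ 1 : ∑_{s=1}^t 1{Y_s ≥ Y_0} ≥ h}. Then for every integer N ≥ 0, P(γ(h) > h + N − 1) = h/(h+N); equivalently, Q = h/γ(h) is an exact p-value: P(Q ≤ h/(h+N)) = h/(h+N). -/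
/-! With `n = h + N`, the event says that `Y_0` loses fewer than `h` times against
`Y_1, …, Y_{n-1}`. Without ties the loss counts of the `n` coordinates are a permutation of
`0, …, n - 1`, so exactly `h` coordinates lose fewer than `h` times. By exchangeability every
coordinate does so with the same probability, which is therefore `h / n`. -/

open MeasureTheory Finset
open scoped ENNReal

section LossCount

variable {ι α : Type*} [Fintype ι] [DecidableEq ι] [LinearOrder α]

def lossCount (x : ι → α) (i : ι) : ℕ := #{j | j ≠ i ∧ x i ≤ x j}

lemma lossCount_comp_perm (x : ι → α) (σ : Equiv.Perm ι) (i : ι) :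
    lossCount (x ∘ σ) i = lossCount x (σ i) := by
  refine card_equiv σ fun j => ?_
  simp

lemma lossCount_lt_card (x : ι → α) (i : ι) : lossCount x i < Fintype.card ι :=
  card_lt_univ_of_notMem (x := i) (by simp)

lemma lossCount_lt_of_lt {x : ι → α} {a b : ι} (hab : x a < x b) :
    lossCount x b < lossCount x a := by
  refine card_lt_card ⟨fun j hj => ?_, fun hsub => ?_⟩
  · simp only [mem_filter, mem_univ, true_and] at hj ⊢
    exact ⟨by rintro rfl; exact hj.2.not_gt hab, hab.le.trans hj.2⟩
  · have hb : b ∈ ({j | j ≠ a ∧ x a ≤ x j} : Finset ι) := by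
      simpa using ⟨ne_of_apply_ne x hab.ne', hab.le⟩
    simpa using hsub hb

lemma lossCount_injective {x : ι → α} (hx : Function.Injective x) :
    Function.Injective (lossCount x) := by
  intro a b hab
  by_contra hne
  rcases lt_or_gt_of_ne (hx.ne hne) with hlt | hlt
  · exact (lossCount_lt_of_lt hlt).ne' hab
  · exact (lossCount_lt_of_lt hlt).ne hab

lemma image_lossCount {x : ι → α} (hx : Function.Injective x) :
    univ.image (lossCount x) = range (Fintype.card ι) :=
  eq_of_subset_of_card_le (fun _ hm => by
      obtain ⟨i, -, rfl⟩ := mem_image.1 hm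
      exact mem_range.2 (lossCount_lt_card x i))
    (by rw [card_image_of_injective _ (lossCount_injective hx), card_range, card_univ])

lemma card_filter_lossCount_lt {x : ι → α} (hx : Function.Injective x) {h : ℕ}
    (hh : h ≤ Fintype.card ι) : #{i | lossCount x i < h} = h := by
  have hrange : (range (Fintype.card ι)).filter (· < h) = range h := by
    ext m
    simp only [mem_filter, mem_range]
    omega
  calc #{i | lossCount x i < h} = #((univ.image (lossCount x)).filter (· < h)) := by
        rw [filter_image, card_image_of_injective _ (lossCount_injective hx)]
    _ = h := by rw [image_lossCount hx, hrange, card_range]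

lemma measurable_lossCount [TopologicalSpace α] [OrderClosedTopology α]
    [SecondCountableTopology α] [MeasurableSpace α] [OpensMeasurableSpace α] (i : ι) :
    Measurable fun x : ι → α => lossCount x i := by
  simp only [lossCount, card_filter]
  refine Finset.measurable_sum _ fun j _ => Measurable.ite ?_ measurable_const measurable_const
  exact (MeasurableSet.const _).inter
    (measurableSet_le (measurable_pi_apply i) (measurable_pi_apply j))

end LossCount

section Measure

variable {Ω ι α : Type*} [MeasurableSpace Ω]

lemma sum_measure_eq_of_ae_card_eq [Fintype ι] (μ : Measure Ω) {E : ι → Set Ω}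
    [∀ ω, DecidablePred (ω ∈ E ·)] (hE : ∀ i, MeasurableSet (E i)) {k : ℕ}
    (hk : ∀ᵐ ω ∂μ, #{i | ω ∈ E i} = k) :
    ∑ i, μ (E i) = k * μ Set.univ := by
  have hcount : ∀ᵐ ω ∂μ, ∑ i, (E i).indicator 1 ω = (k : ℝ≥0∞) := by
    filter_upwards [hk] with ω hω
    simp [← hω, Set.indicator_apply, sum_boole]
  calc ∑ i, μ (E i) = ∑ i, ∫⁻ ω, (E i).indicator 1 ω ∂μ := by
        simp only [lintegral_indicator_one (hE _)]
    _ = ∫⁻ ω, ∑ i, (E i).indicator 1 ω ∂μ :=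
        (lintegral_finsetSum _ fun i _ => measurable_one.indicator (hE i)).symm
    _ = k * μ Set.univ := by rw [lintegral_congr_ae hcount, lintegral_const]

variable [MeasurableSpace α]

def Exchangeable (μ : Measure Ω) (X : Ω → ι → α) : Prop :=
  ∀ σ : Equiv.Perm ι, μ.map (fun ω => X ω ∘ σ) = μ.map X

namespace Exchangeable

variable {μ : Measure Ω} {X : Ω → ι → α}

lemma measure_comp_perm_mem (hexch : Exchangeable μ X) (hX : Measurable X)
    (σ : Equiv.Perm ι) {S : Set (ι → α)} (hS : MeasurableSet S) :
    μ {ω | X ω ∘ σ ∈ S} = μ (X ⁻¹' S) := by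
  have hXσ : Measurable fun ω => X ω ∘ σ :=
    measurable_pi_lambda _ fun k => (measurable_pi_apply (σ k)).comp hX
  rw [← Measure.map_apply hX hS, ← hexch σ, Measure.map_apply hXσ hS]
  rfl

variable [Fintype ι] [DecidableEq ι] [LinearOrder α] [TopologicalSpace α]
  [OrderClosedTopology α] [SecondCountableTopology α] [OpensMeasurableSpace α]

lemma measure_lossCount_lt_eq (hexch : Exchangeable μ X) (hX : Measurable X) (h : ℕ)
    (i j : ι) : μ {ω | lossCount (X ω) i < h} = μ {ω | lossCount (X ω) j < h} := by
  have hS : MeasurableSet {x : ι → α | lossCount x j < h} :=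
    measurableSet_lt (measurable_lossCount j) measurable_const
  have hset : {ω | lossCount (X ω) i < h}
      = {ω | X ω ∘ Equiv.swap j i ∈ {x | lossCount x j < h}} := by
    ext ω
    show lossCount (X ω) i < h ↔ lossCount (X ω ∘ Equiv.swap j i) j < h
    rw [lossCount_comp_perm, Equiv.swap_apply_left]
  rw [hset, hexch.measure_comp_perm_mem hX _ hS]
  rfl

theorem measure_lossCount_lt [IsProbabilityMeasure μ] (hexch : Exchangeable μ X)
    (hX : Measurable X) (hinj : ∀ᵐ ω ∂μ, Function.Injective (X ω)) {h : ℕ}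
    (hh : h ≤ Fintype.card ι) (i : ι) :
    μ {ω | lossCount (X ω) i < h} = h / Fintype.card ι := by
  have hE : ∀ j, MeasurableSet {ω | lossCount (X ω) j < h} := fun j =>
    measurableSet_lt ((measurable_lossCount j).comp hX) measurable_const
  have hsum := sum_measure_eq_of_ae_card_eq μ hE
    (hinj.mono fun ω hω => card_filter_lossCount_lt hω hh)
  simp only [hexch.measure_lossCount_lt_eq hX h _ i, sum_const, card_univ, nsmul_eq_mul,
    measure_univ, mul_one] at hsum
  have hcard : (Fintype.card ι : ℝ≥0∞) ≠ 0 := by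
    simpa using (Fintype.card_pos_iff.2 ⟨i⟩).ne'
  exact (ENNReal.eq_div_iff hcard (ENNReal.natCast_ne_top _)).2 hsum

end Exchangeable

end Measure

lemma lossCount_fin_zero {α : Type*} [LinearOrder α] (y : ℕ → α) (m : ℕ) :
    lossCount (fun k : Fin (m + 1) => y k) 0 = #{s ∈ Icc 1 m | y 0 ≤ y s} := by
  refine card_bij (fun j _ => j.val) (fun j hj => ?_) (fun _ _ _ _ hval => Fin.ext hval)
    (fun s hs => ?_)
  · simp only [mem_filter, mem_univ, true_and, mem_Icc, ← Fin.val_ne_iff, Fin.val_zero] at hj ⊢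
    exact ⟨⟨Nat.one_le_iff_ne_zero.2 hj.1, Nat.lt_succ_iff.1 j.isLt⟩, hj.2⟩
  · simp only [mem_filter, mem_Icc] at hs
    refine ⟨⟨s, by omega⟩, ?_, rfl⟩
    simp only [mem_filter, mem_univ, true_and, ← Fin.val_ne_iff, Fin.val_zero]
    exact ⟨by omega, hs.2⟩

/-- Negative binomial permutation test: for exchangeable `Y_0, Y_1, …` with
almost surely no ties, the time `γ(h)` of the `h`-th loss satisfies
`P(γ(h) > h+N−1) = h/(h+N)` for every `N ≥ 0`; equivalently `Q = h/γ(h)` is an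
exact p-value. The event `{γ(h) > h+N−1}` is expressed as: fewer than `h` of
`Y_1, …, Y_{h+N−1}` are `≥ Y_0`. -/
theorem stmt17 {Ω : Type*} [MeasurableSpace Ω] (μ : Measure Ω) [IsProbabilityMeasure μ]
    (Y : ℕ → Ω → ℝ) (hmeas : ∀ t, Measurable (Y t))
    (hexch : ∀ (n : ℕ) (σ : Equiv.Perm (Fin n)),
      μ.map (fun ω => fun k : Fin n => Y (σ k) ω)
        = μ.map (fun ω => fun k : Fin n => Y k ω))
    (hties : ∀ᵐ ω ∂μ, ∀ i j : ℕ, i ≠ j → Y i ω ≠ Y j ω)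
    (h : ℕ) (hh : 1 ≤ h) (N : ℕ) :
    μ {ω | (((Finset.Icc 1 (h + N - 1)).filter
        (fun s => Y 0 ω ≤ Y s ω)).card) < h}
      = ENNReal.ofReal ((h : ℝ) / ((h : ℝ) + N)) := by
  obtain ⟨m, hm⟩ : ∃ m, h + N = m + 1 := ⟨h + N - 1, by omega⟩
  set X : Ω → Fin (m + 1) → ℝ := fun ω k => Y k ω
  have hX : Measurable X := measurable_pi_lambda _ fun k => hmeas k
  have hinj : ∀ᵐ ω ∂μ, Function.Injective (X ω) :=
    hties.mono fun ω hω a b hab => Fin.ext (not_imp_not.1 (hω a b) hab)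
  have hevent : ∀ ω, #{s ∈ Icc 1 (h + N - 1) | Y 0 ω ≤ Y s ω} = lossCount (X ω) 0 := by
    intro ω
    rw [hm, Nat.add_sub_cancel]
    exact (lossCount_fin_zero (Y · ω) m).symm
  have hexchX : Exchangeable μ X := hexch (m + 1)
  simp only [hevent]
  rw [hexchX.measure_lossCount_lt hX hinj (by rw [Fintype.card_fin]; omega), Fintype.card_fin,
    ← hm, ← Nat.cast_add, ENNReal.ofReal_div_of_pos (by exact_mod_cast (by omega)),
    ENNReal.ofReal_natCast, ENNReal.ofReal_natCast]
end
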